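/- Let C be a positive integer with C ≡ 0 (mod 4). Define Γ₁* = Γ¹(C) ∩ Γ₀(2), Γ₂* = Γ¹(C/2) ∩ Γ⁰(C), and Γ₃* = Γ₀(2) ∪ Γ¹(C). Then the set G = Γ₁* ∪ (Γ₂* \ Γ₃*) is a subgroup of SL₂(ℤ); moreover it contains the principal congruence subgroup Γ(C), so G is a congruence subgroup of SL₂(ℤ). -/

import Mathlib

abbrev SL2Z := Matrix.SpecialLinearGroup (Fin 2) ℤ

/-- `Γ₀(N)`: lower-left entry divisible by `N`. -/
def myGamma0 (N : ℕ) : Set SL2Z := {g | (N:ℤ) ∣ g.1 1 0}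

/-- `Γ⁰(N)`: upper-right entry divisible by `N`. -/
def myGammaUp0 (N : ℕ) : Set SL2Z := {g | (N:ℤ) ∣ g.1 0 1}

/-- `Γ¹(N)`: upper-right entry divisible by `N`, diagonal entries `≡ 1 (mod N)`. -/
def myGammaUp1 (N : ℕ) : Set SL2Z :=
  {g | (N:ℤ) ∣ g.1 0 1 ∧ (N:ℤ) ∣ (g.1 0 0 - 1) ∧ (N:ℤ) ∣ (g.1 1 1 - 1)}

/-- The principal congruence subgroup `Γ(N)` as a set. -/
def myGammaFull (N : ℕ) : Set SL2Z :=
  {g | (N:ℤ) ∣ g.1 0 1 ∧ (N:ℤ) ∣ g.1 1 0 ∧ (N:ℤ) ∣ (g.1 0 0 - 1) ∧ (N:ℤ) ∣ (g.1 1 1 - 1)}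

/-- The group `A_α` from the paper, depending on `a` and `C`. -/
def Aalpha (a : ℤ) (C : ℕ) : Set SL2Z :=
  if a = 0 ∨ a = 2 then myGammaUp1 (Nat.lcm 2 C)
  else if ¬ (4 ∣ C) then myGammaUp1 (Nat.lcm 2 C) ∩ myGamma0 2
  else (myGammaUp1 C ∩ myGamma0 2) ∪
    ((myGammaUp1 (C/2) ∩ myGammaUp0 C) \ (myGamma0 2 ∪ myGammaUp1 C))


/-! Write `C = 4k` and `e = 2k`. An element of `Γ⁰(C)` lies in `G` exactly when
`a ≡ 1 + e c (mod C)`: for even `c` this says `g ∈ Γ¹(C)`, for odd `c` it says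
`a ≡ 1 + C/2 (mod C)`, which is what `Γ¹(C/2) \ Γ¹(C)` means. Modulo `C` this is the preimage of
the matrices `!![1 + e c, 0; c, 1 - e c]`, and these form a group over any commutative ring in
which `e² = 0`. -/

open Matrix Matrix.SpecialLinearGroup
open scoped MatrixGroups

section TwistedLowerUnipotent

variable {R : Type*} [CommRing R] {e : R}

lemma SL2_coe_mul_apply (g h : SL(2, R)) (i j : Fin 2) :
    (g * h : SL(2, R)) i j = g i 0 * h 0 j + g i 1 * h 1 j := by
  simp [Matrix.mul_apply, Fin.sum_univ_two]

lemma SL2_lowerRight_eq_of_twisted (he : e * e = 0) {g : SL(2, R)} (hb : g 0 1 = 0)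
    (ha : g 0 0 = 1 + e * g 1 0) : g 1 1 = 1 - e * g 1 0 := by
  have hdet := g.det_coe
  rw [Matrix.det_fin_two, hb, ha] at hdet
  linear_combination (1 - e * g 1 0) * hdet + g 1 1 * g 1 0 ^ 2 * he

def twistedLowerUnipotent (e : R) (he : e * e = 0) : Subgroup SL(2, R) where
  carrier := {g | g 0 1 = 0 ∧ g 0 0 = 1 + e * g 1 0}
  one_mem' := by simp
  mul_mem' := by
    rintro g h ⟨hb₁, ha₁⟩ ⟨hb₂, ha₂⟩
    have hd₁ := SL2_lowerRight_eq_of_twisted he hb₁ ha₁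
    refine ⟨?_, ?_⟩
    · simp only [SL2_coe_mul_apply, hb₁, hb₂]
      ring
    · simp only [SL2_coe_mul_apply, hb₁, ha₁, ha₂, hd₁]
      linear_combination g 1 0 * h 1 0 * he
  inv_mem' := by
    rintro g ⟨hb, ha⟩
    have hd := SL2_lowerRight_eq_of_twisted he hb ha
    refine ⟨?_, ?_⟩
    · simp [SL2_inv_expl, hb]
    · simp [SL2_inv_expl, hd, sub_eq_add_neg]

end TwistedLowerUnipotent

lemma two_mul_dvd_sub_iff {n x : ℤ} (hn : n ≠ 0) : 2 * n ∣ x - n ↔ n ∣ x ∧ ¬ 2 * n ∣ x := by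
  constructor
  · rintro ⟨t, ht⟩
    refine ⟨⟨2 * t + 1, by linear_combination ht⟩, ?_⟩
    rintro ⟨s, hs⟩
    have : n * (2 * (s - t) - 1) = 0 := by linear_combination ht - hs
    rcases mul_eq_zero.mp this with h | h
    · exact hn h
    · omega
  · rintro ⟨⟨t, rfl⟩, hodd⟩
    obtain ⟨s, rfl⟩ : Odd t := Int.not_even_iff_odd.mp fun ⟨s, hs⟩ ↦ hodd ⟨s, by rw [hs]; ring⟩
    exact ⟨s, by ring⟩

lemma dvd_sub_one_iff_of_dvd_upperRight {n : ℤ} {g : SL2Z} (hb : n ∣ g 0 1) :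
    n ∣ g 0 0 - 1 ↔ n ∣ g 1 1 - 1 := by
  have hdet := g.det_coe
  rw [Matrix.det_fin_two] at hdet
  have key : ∀ a d : ℤ, a * d - g 0 1 * g 1 0 = 1 → n ∣ a - 1 → n ∣ d - 1 := by
    rintro a d had ha
    rw [show d - 1 = g 0 1 * g 1 0 - (a - 1) * d by linear_combination had]
    exact dvd_sub (dvd_mul_of_dvd_left hb _) (dvd_mul_of_dvd_left ha _)
  exact ⟨key _ _ hdet, key _ _ (by linear_combination hdet)⟩

lemma mem_myGammaUp1_iff {n : ℕ} {g : SL2Z} :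
    g ∈ myGammaUp1 n ↔ (n : ℤ) ∣ g 0 1 ∧ (n : ℤ) ∣ g 0 0 - 1 :=
  ⟨fun h ↦ ⟨h.1, h.2.1⟩, fun ⟨hb, ha⟩ ↦ ⟨hb, ha, (dvd_sub_one_iff_of_dvd_upperRight hb).mp ha⟩⟩

def twistedGammaUp1 (k : ℕ) : Subgroup SL2Z :=
  (twistedLowerUnipotent (2 * k : ZMod (4 * k)) (by
      rw [show (2 * k : ZMod (4 * k)) * (2 * k) = k * (4 * k : ℕ) by push_cast; ring,
        ZMod.natCast_self, mul_zero])).comap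
    (map (Int.castRingHom (ZMod (4 * k))))

lemma mem_twistedGammaUp1_iff {k : ℕ} {g : SL2Z} :
    g ∈ twistedGammaUp1 k ↔
      ((4 * k : ℕ) : ℤ) ∣ g 0 1 ∧ ((4 * k : ℕ) : ℤ) ∣ g 0 0 - 1 - 2 * k * g 1 0 := by
  simp only [twistedGammaUp1, twistedLowerUnipotent, Subgroup.mem_comap, Subgroup.mem_mk,
    Submonoid.mem_mk, Subsemigroup.mem_mk, Set.mem_ofPred_eq, SL_reduction_mod_hom_val]
  rw [← sub_eq_zero (a := ((g 0 0 : ℤ) : ZMod (4 * k))), ← ZMod.intCast_zmod_eq_zero_iff_dvd,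
    ← ZMod.intCast_zmod_eq_zero_iff_dvd]
  push_cast
  rw [sub_sub]

theorem coe_twistedGammaUp1 {k : ℕ} (hk : k ≠ 0) :
    (twistedGammaUp1 k : Set SL2Z) = (myGammaUp1 (4 * k) ∩ myGamma0 2) ∪
      ((myGammaUp1 (4 * k / 2) ∩ myGammaUp0 (4 * k)) \ (myGamma0 2 ∪ myGammaUp1 (4 * k))) := by
  ext g
  rw [SetLike.mem_coe, mem_twistedGammaUp1_iff, show 4 * k / 2 = 2 * k by omega]
  simp only [Set.mem_union, Set.mem_inter_iff, Set.mem_sdiff, mem_myGammaUp1_iff, myGamma0,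
    myGammaUp0, Set.mem_ofPred_eq]
  push_cast
  rcases Int.even_or_odd (g 1 0) with ⟨m, hm⟩ | ⟨m, hm⟩
  · have h2c : (2 : ℤ) ∣ g 1 0 := ⟨m, by omega⟩
    rw [show 2 * (k : ℤ) * g 1 0 = 4 * k * m by rw [hm]; ring, dvd_sub_left (dvd_mul_right _ _)]
    tauto
  · have h2c : ¬ (2 : ℤ) ∣ g 1 0 := by omega
    have h2k : ∀ x : ℤ, 4 * (k : ℤ) ∣ x → 2 * (k : ℤ) ∣ x :=
      fun _ ↦ dvd_trans ⟨2, by ring⟩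
    have hsplit := two_mul_dvd_sub_iff (n := 2 * (k : ℤ)) (x := g 0 0 - 1) (by omega)
    rw [show 2 * (2 * (k : ℤ)) = 4 * k by ring] at hsplit
    rw [show g 0 0 - 1 - 2 * (k : ℤ) * g 1 0 = g 0 0 - 1 - 2 * k - 4 * k * m by rw [hm]; ring,
      dvd_sub_left (dvd_mul_right _ _), hsplit]
    tauto

theorem myGammaFull_subset_twistedGammaUp1 (k : ℕ) :
    myGammaFull (4 * k) ⊆ twistedGammaUp1 k := by
  rintro g ⟨hb, hc, ha, -⟩
  exact mem_twistedGammaUp1_iff.mpr ⟨hb, dvd_sub ha (dvd_mul_of_dvd_right hc _)⟩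

theorem stmt0 (C : ℕ) (hC : 0 < C) (h4 : C % 4 = 0) :
    ∃ H : Subgroup SL2Z,
      (H : Set SL2Z) =
        (myGammaUp1 C ∩ myGamma0 2) ∪
          ((myGammaUp1 (C/2) ∩ myGammaUp0 C) \ (myGamma0 2 ∪ myGammaUp1 C)) ∧
      myGammaFull C ⊆ (H : Set SL2Z) := by
  obtain ⟨k, rfl⟩ : 4 ∣ C := Nat.dvd_of_mod_eq_zero h4
  exact ⟨twistedGammaUp1 k, coe_twistedGammaUp1 (by omega), myGammaFull_subset_twistedGammaUp1 k⟩
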